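/- arXiv:2103.15150 — 6 statements merged into one kernel-verified Lean document; each statement's English description precedes it below -/
import Mathlib

section
/- Let B be a bicategory in which every 1-morphism admits a right adjoint. Then for every pair of objects a, b of B there exists a functor R : (a ⟶ b)ᵒᵖ ⥤ (b ⟶ a) between hom-categories such that for every 1-morphism f : a ⟶ b there is an adjunction f ⊣ R(f) in B, and such that R sends each 2-morphism α : f ⟶ g to the mate α* : R(g) ⟶ R(f) built from the chosen adjunctions. (This is the action on hom-categories of the right-adjoint 2-functor (−)* of Lemma 1.4.) -/
open CategoryTheory CategoryTheory.Bicategory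

/-- The mate of a 2-morphism `α : f ⟶ g` with respect to chosen adjunctions `f ⊣ f'` and
`g ⊣ g'` in a bicategory: the composite
`g' ≅ g' ≫ 𝟙 a ⟶ g' ≫ (f ≫ f') ⟶ g' ≫ (g ≫ f') ≅ (g' ≫ g) ≫ f' ⟶ 𝟙 b ≫ f' ≅ f'`. -/
def Bicategory.mate {B : Type*} [Bicategory B] {a b : B} {f g : a ⟶ b} {f' g' : b ⟶ a}
    (adj₁ : Bicategory.Adjunction f f') (adj₂ : Bicategory.Adjunction g g') (α : f ⟶ g) :
    g' ⟶ f' :=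
  (ρ_ g').inv ≫ g' ◁ adj₁.unit ≫ g' ◁ (α ▷ f') ≫ (α_ g' g f').inv ≫
    adj₂.counit ▷ f' ≫ (λ_ f').hom

set_option maxHeartbeats 1000000

namespace Bicategory
variable {B : Type*} [Bicategory B] {a b : B}

lemma mate_comp {f g h : a ⟶ b} {f' g' h' : b ⟶ a}
    (adj₁ : Bicategory.Adjunction f f') (adj₂ : Bicategory.Adjunction g g')
    (adj₃ : Bicategory.Adjunction h h') (α : f ⟶ g) (β : g ⟶ h) :
    mate adj₂ adj₃ β ≫ mate adj₁ adj₂ α = mate adj₁ adj₃ (α ≫ β) := by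
  calc mate adj₂ adj₃ β ≫ mate adj₁ adj₂ α
      = 𝟙 _ ⊗≫ h' ◁ adj₂.unit ⊗≫ h' ◁ β ▷ g' ⊗≫
          (adj₃.counit ▷ (g' ≫ 𝟙 a) ≫ 𝟙 b ◁ (g' ◁ adj₁.unit)) ⊗≫
          g' ◁ α ▷ f' ⊗≫ adj₂.counit ▷ f' ⊗≫ 𝟙 _ := by
        dsimp [mate]; bicategory
    _ = 𝟙 _ ⊗≫ h' ◁ adj₂.unit ⊗≫ h' ◁ β ▷ g' ⊗≫ (h' ≫ h) ◁ (g' ◁ adj₁.unit) ⊗≫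
          (adj₃.counit ▷ (g' ≫ f ≫ f') ≫ 𝟙 b ◁ (g' ◁ α ▷ f')) ⊗≫
          adj₂.counit ▷ f' ⊗≫ 𝟙 _ := by
        rw [← whisker_exchange]; bicategory
    _ = 𝟙 _ ⊗≫ h' ◁ adj₂.unit ⊗≫ h' ◁ β ▷ g' ⊗≫ (h' ≫ h) ◁ (g' ◁ adj₁.unit) ⊗≫
          (h' ≫ h) ◁ (g' ◁ α ▷ f') ⊗≫
          (adj₃.counit ▷ ((g' ≫ g) ≫ f') ≫ 𝟙 b ◁ (adj₂.counit ▷ f')) ⊗≫ 𝟙 _ := by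
        rw [← whisker_exchange]; bicategory
    _ = 𝟙 _ ⊗≫ h' ◁ adj₂.unit ⊗≫
          h' ◁ (β ▷ (g' ≫ 𝟙 a) ≫ h ◁ (g' ◁ adj₁.unit)) ⊗≫
          (h' ≫ h) ◁ (g' ◁ α ▷ f') ⊗≫
          (h' ≫ h) ◁ (adj₂.counit ▷ f') ⊗≫ adj₃.counit ▷ (𝟙 b ≫ f') ⊗≫ 𝟙 _ := by
        rw [← whisker_exchange]; bicategory
    _ = 𝟙 _ ⊗≫ h' ◁ adj₂.unit ⊗≫ (h' ≫ g) ◁ (g' ◁ adj₁.unit) ⊗≫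
          h' ◁ (β ▷ (g' ≫ f ≫ f') ≫ h ◁ (g' ◁ α ▷ f')) ⊗≫
          (h' ≫ h) ◁ (adj₂.counit ▷ f') ⊗≫ adj₃.counit ▷ (𝟙 b ≫ f') ⊗≫ 𝟙 _ := by
        rw [← whisker_exchange]; bicategory
    _ = 𝟙 _ ⊗≫ h' ◁ adj₂.unit ⊗≫ (h' ≫ g) ◁ (g' ◁ adj₁.unit) ⊗≫
          (h' ≫ g) ◁ (g' ◁ α ▷ f') ⊗≫
          h' ◁ (β ▷ ((g' ≫ g) ≫ f') ≫ h ◁ (adj₂.counit ▷ f')) ⊗≫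
          adj₃.counit ▷ (𝟙 b ≫ f') ⊗≫ 𝟙 _ := by
        rw [← whisker_exchange]; bicategory
    _ = 𝟙 _ ⊗≫ h' ◁ (adj₂.unit ▷ 𝟙 a ≫ (g ≫ g') ◁ adj₁.unit) ⊗≫
          (h' ≫ g) ◁ (g' ◁ α ▷ f') ⊗≫
          (h' ≫ g) ◁ (adj₂.counit ▷ f') ⊗≫ h' ◁ β ▷ (𝟙 b ≫ f') ⊗≫
          adj₃.counit ▷ (𝟙 b ≫ f') ⊗≫ 𝟙 _ := by
        rw [← whisker_exchange]; bicategory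
    _ = 𝟙 _ ⊗≫ h' ◁ adj₁.unit ⊗≫
          h' ◁ (adj₂.unit ▷ (f ≫ f') ≫ (g ≫ g') ◁ (α ▷ f')) ⊗≫
          (h' ≫ g) ◁ (adj₂.counit ▷ f') ⊗≫ h' ◁ β ▷ (𝟙 b ≫ f') ⊗≫
          adj₃.counit ▷ (𝟙 b ≫ f') ⊗≫ 𝟙 _ := by
        rw [← whisker_exchange]; bicategory
    _ = 𝟙 _ ⊗≫ h' ◁ adj₁.unit ⊗≫ h' ◁ (α ▷ f') ⊗≫
          h' ◁ (leftZigzag adj₂.unit adj₂.counit ▷ f') ⊗≫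
          h' ◁ β ▷ (𝟙 b ≫ f') ⊗≫ adj₃.counit ▷ (𝟙 b ≫ f') ⊗≫ 𝟙 _ := by
        rw [← whisker_exchange]; dsimp [leftZigzag]; bicategory
    _ = 𝟙 _ ⊗≫ h' ◁ adj₁.unit ⊗≫ h' ◁ (α ▷ f') ⊗≫
          h' ◁ (((λ_ g).hom ≫ (ρ_ g).inv) ▷ f') ⊗≫
          h' ◁ β ▷ (𝟙 b ≫ f') ⊗≫ adj₃.counit ▷ (𝟙 b ≫ f') ⊗≫ 𝟙 _ := by
        rw [adj₂.left_triangle]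
    _ = mate adj₁ adj₃ (α ≫ β) := by
        dsimp [mate]; rw [comp_whiskerRight, Bicategory.whiskerLeft_comp]; bicategory

lemma mate_id {f : a ⟶ b} {f' : b ⟶ a} (adj : Bicategory.Adjunction f f') :
    mate adj adj (𝟙 f) = 𝟙 f' := by
  calc mate adj adj (𝟙 f)
      = (ρ_ f').inv ≫ rightZigzag adj.unit adj.counit ≫ (λ_ f').hom := by
        dsimp [mate, rightZigzag]; bicategory
    _ = 𝟙 f' := by rw [adj.right_triangle]; simp

end Bicategory

/-- In a bicategory in which every 1-morphism admits a right adjoint, for every pair of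
objects `a`, `b` there is a functor `(a ⟶ b)ᵒᵖ ⥤ (b ⟶ a)` sending each 1-morphism to a
right adjoint of it and each 2-morphism to its mate with respect to the chosen adjunctions. -/
theorem right_adjoint_functor_of_has_right_adjoints
    {B : Type*} [Bicategory B]
    (H : ∀ {x y : B} (f : x ⟶ y), ∃ g : y ⟶ x, Nonempty (Bicategory.Adjunction f g))
    (a b : B) :
    ∃ (R : (a ⟶ b)ᵒᵖ ⥤ (b ⟶ a))
      (adj : ∀ f : a ⟶ b, Bicategory.Adjunction f (R.obj (Opposite.op f))),
      ∀ (f g : a ⟶ b) (α : f ⟶ g),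
        R.map α.op = Bicategory.mate (adj f) (adj g) α := by
  have adj : ∀ f : a ⟶ b, Bicategory.Adjunction f (H f).choose :=
    fun f => (H f).choose_spec.some
  refine ⟨{
    obj := fun fop => (H fop.unop).choose
    map := fun {X Y} u => Bicategory.mate (adj Y.unop) (adj X.unop) u.unop
    map_id := fun X => Bicategory.mate_id (adj X.unop)
    map_comp := fun {X Y Z} u v =>
      (Bicategory.mate_comp (adj Z.unop) (adj Y.unop) (adj X.unop) v.unop u.unop).symm },
    fun f => adj f, fun f g α => rfl⟩
end

section
/- Let B be a bicategory in which every 1-morphism admits both a left adjoint and a right adjoint. Then for every pair of objects a, b of B there is an equivalence of categories (a ⟶ b)ᵒᵖ ≌ (b ⟶ a) whose underlying functor sends each 1-morphism f : a ⟶ b to a right adjoint of f and whose inverse functor sends each 1-morphism g : b ⟶ a to a left adjoint of g. (This is the local expression of the statement in Lemma 1.4 that the left-adjoint 2-functor is a pseudo-inverse of the right-adjoint 2-functor.) -/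
open CategoryTheory CategoryTheory.Bicategory

namespace MateAuxForHomCatEquiv
variable {B : Type*} [Bicategory B] {a b : B} {f f₁ f₂ f₃ : a ⟶ b} {g g' g₁ g₂ g₃ : b ⟶ a}

/-- The mate of a 2-morphism between left adjoints. -/
def mateR (adj : Adjunction f₁ g₁) (adj' : Adjunction f₂ g₂) (θ : f₂ ⟶ f₁) : g₁ ⟶ g₂ :=
  𝟙 g₁ ⊗≫ g₁ ◁ adj'.unit ⊗≫ (g₁ ◁ θ ≫ adj.counit) ▷ g₂ ⊗≫ 𝟙 g₂

/-- The mate of a 2-morphism between right adjoints. -/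
def mateL (adj : Adjunction f₁ g₁) (adj' : Adjunction f₂ g₂) (ψ : g₁ ⟶ g₂) : f₂ ⟶ f₁ :=
  𝟙 f₂ ⊗≫ adj.unit ▷ f₂ ⊗≫ f₁ ◁ (ψ ▷ f₂ ≫ adj'.counit) ⊗≫ 𝟙 f₁

lemma mateR_id (adj : Adjunction f₁ g₁) : mateR adj adj (𝟙 f₁) = 𝟙 g₁ := by
  dsimp only [mateR]
  calc
    _ = 𝟙 g₁ ⊗≫ rightZigzag adj.unit adj.counit ⊗≫ 𝟙 g₁ := by
      rw [rightZigzag]; simp only [Bicategory.whiskerLeft_id, Category.id_comp]; bicategory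
    _ = _ := by rw [adj.right_triangle]; bicategory

lemma mateR_comp (adj₁ : Adjunction f₁ g₁) (adj₂ : Adjunction f₂ g₂) (adj₃ : Adjunction f₃ g₃)
    (θ : f₂ ⟶ f₁) (θ' : f₃ ⟶ f₂) :
    mateR adj₁ adj₂ θ ≫ mateR adj₂ adj₃ θ' = mateR adj₁ adj₃ (θ' ≫ θ) := by
  dsimp only [mateR]
  calc
    _ = 𝟙 g₁ ⊗≫ g₁ ◁ adj₂.unit ⊗≫
          ((g₁ ◁ θ ≫ adj₁.counit) ▷ g₂ ▷ 𝟙 a ≫ (𝟙 b ≫ g₂) ◁ adj₃.unit) ⊗≫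
          (g₂ ◁ θ' ≫ adj₂.counit) ▷ g₃ ⊗≫ 𝟙 g₃ := by
      bicategory
    _ = 𝟙 g₁ ⊗≫ g₁ ◁ adj₂.unit ⊗≫ ((g₁ ≫ f₂) ≫ g₂) ◁ adj₃.unit ⊗≫
          ((g₁ ◁ θ ≫ adj₁.counit) ▷ ((g₂ ≫ f₃) ≫ g₃) ≫
            𝟙 b ◁ ((g₂ ◁ θ' ≫ adj₂.counit) ▷ g₃)) ⊗≫ 𝟙 g₃ := by
      rw [← whisker_exchange]; bicategory
    _ = 𝟙 g₁ ⊗≫ g₁ ◁ (adj₂.unit ▷ 𝟙 a ≫ (f₂ ≫ g₂) ◁ adj₃.unit) ⊗≫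
          (g₁ ≫ f₂) ◁ ((g₂ ◁ θ' ≫ adj₂.counit) ▷ g₃) ⊗≫
          (g₁ ◁ θ ≫ adj₁.counit) ▷ g₃ ⊗≫ 𝟙 g₃ := by
      rw [← whisker_exchange]; bicategory
    _ = 𝟙 g₁ ⊗≫ g₁ ◁ adj₃.unit ⊗≫
          g₁ ◁ (adj₂.unit ▷ (f₃ ≫ g₃) ≫ (f₂ ≫ g₂) ◁ (θ' ▷ g₃)) ⊗≫
          (g₁ ≫ f₂) ◁ (adj₂.counit ▷ g₃) ⊗≫ (g₁ ◁ θ ≫ adj₁.counit) ▷ g₃ ⊗≫ 𝟙 g₃ := by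
      rw [← whisker_exchange]; bicategory
    _ = 𝟙 g₁ ⊗≫ g₁ ◁ adj₃.unit ⊗≫ g₁ ◁ θ' ▷ g₃ ⊗≫
          g₁ ◁ ((leftZigzag adj₂.unit adj₂.counit) ▷ g₃) ⊗≫
          (g₁ ◁ θ ≫ adj₁.counit) ▷ g₃ ⊗≫ 𝟙 g₃ := by
      rw [← whisker_exchange]; bicategory
    _ = _ := by
      rw [adj₂.left_triangle]; bicategory

lemma mateL_mateR (adj : Adjunction f₁ g₁) (adj' : Adjunction f₂ g₂) (θ : f₂ ⟶ f₁) :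
    mateL adj adj' (mateR adj adj' θ) = θ := by
  dsimp only [mateL, mateR]
  calc
    _ = 𝟙 f₂ ⊗≫ (adj.unit ▷ (𝟙 a ≫ f₂) ≫ (f₁ ≫ g₁) ◁ (adj'.unit ▷ f₂)) ⊗≫
          f₁ ◁ ((g₁ ◁ θ ≫ adj.counit) ▷ (g₂ ≫ f₂)) ⊗≫ f₁ ◁ adj'.counit ⊗≫ 𝟙 f₁ := by
      bicategory
    _ = 𝟙 f₂ ⊗≫ adj'.unit ▷ f₂ ⊗≫
          (adj.unit ▷ (f₂ ≫ g₂ ≫ f₂) ≫ (f₁ ≫ g₁) ◁ (θ ▷ (g₂ ≫ f₂))) ⊗≫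
          f₁ ◁ (adj.counit ▷ (g₂ ≫ f₂)) ⊗≫ f₁ ◁ adj'.counit ⊗≫ 𝟙 f₁ := by
      rw [← whisker_exchange]; bicategory
    _ = 𝟙 f₂ ⊗≫ adj'.unit ▷ f₂ ⊗≫ θ ▷ (g₂ ≫ f₂) ⊗≫
          (leftZigzag adj.unit adj.counit) ▷ (g₂ ≫ f₂) ⊗≫ f₁ ◁ adj'.counit ⊗≫ 𝟙 f₁ := by
      rw [← whisker_exchange]; bicategory
    _ = 𝟙 f₂ ⊗≫ adj'.unit ▷ f₂ ⊗≫ (θ ▷ (g₂ ≫ f₂) ≫ f₁ ◁ adj'.counit) ⊗≫ 𝟙 f₁ := by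
      rw [adj.left_triangle]; bicategory
    _ = 𝟙 f₂ ⊗≫ leftZigzag adj'.unit adj'.counit ⊗≫ θ := by
      rw [← whisker_exchange]; bicategory
    _ = θ := by rw [adj'.left_triangle]; bicategory

lemma mateR_mateL (adj : Adjunction f₁ g₁) (adj' : Adjunction f₂ g₂) (ψ : g₁ ⟶ g₂) :
    mateR adj adj' (mateL adj adj' ψ) = ψ := by
  dsimp only [mateL, mateR]
  calc
    _ = 𝟙 g₁ ⊗≫ g₁ ◁ (𝟙 a ◁ adj'.unit ≫ adj.unit ▷ (f₂ ≫ g₂)) ⊗≫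
          (g₁ ≫ f₁) ◁ ((ψ ▷ f₂ ≫ adj'.counit) ▷ g₂) ⊗≫ adj.counit ▷ g₂ ⊗≫ 𝟙 g₂ := by
      bicategory
    _ = 𝟙 g₁ ⊗≫ g₁ ◁ adj.unit ⊗≫
          (g₁ ≫ f₁) ◁ (g₁ ◁ adj'.unit ≫ ψ ▷ (f₂ ≫ g₂)) ⊗≫
          (g₁ ≫ f₁) ◁ (adj'.counit ▷ g₂) ⊗≫ adj.counit ▷ g₂ ⊗≫ 𝟙 g₂ := by
      rw [whisker_exchange]; bicategory
    _ = 𝟙 g₁ ⊗≫ g₁ ◁ adj.unit ⊗≫ (g₁ ≫ f₁) ◁ (ψ ▷ 𝟙 a) ⊗≫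
          (g₁ ≫ f₁) ◁ (rightZigzag adj'.unit adj'.counit) ⊗≫ adj.counit ▷ g₂ ⊗≫ 𝟙 g₂ := by
      rw [whisker_exchange]; bicategory
    _ = 𝟙 g₁ ⊗≫ g₁ ◁ adj.unit ⊗≫ ((g₁ ≫ f₁) ◁ ψ ≫ adj.counit ▷ g₂) ⊗≫ 𝟙 g₂ := by
      rw [adj'.right_triangle]; bicategory
    _ = 𝟙 g₁ ⊗≫ rightZigzag adj.unit adj.counit ⊗≫ ψ := by
      rw [whisker_exchange]; bicategory
    _ = ψ := by rw [adj.right_triangle]; bicategory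

/-- Transfer an adjunction along an isomorphism of the right adjoint. -/
def adjOfIsoRight (adj : Adjunction f g) (i : g ≅ g') : Adjunction f g' where
  unit := adj.unit ≫ f ◁ i.hom
  counit := i.inv ▷ f ≫ adj.counit
  left_triangle := by
    calc
      _ = 𝟙 _ ⊗≫ adj.unit ▷ f ⊗≫ f ◁ ((i.hom ≫ i.inv) ▷ f) ⊗≫ f ◁ adj.counit ⊗≫ 𝟙 _ := by
        bicategory
      _ = 𝟙 _ ⊗≫ leftZigzag adj.unit adj.counit ⊗≫ 𝟙 _ := by rw [i.hom_inv_id]; bicategory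
      _ = _ := by rw [adj.left_triangle]; bicategory
  right_triangle := by
    calc
      _ = 𝟙 _ ⊗≫ g' ◁ adj.unit ⊗≫ (g' ◁ (f ◁ i.hom) ≫ i.inv ▷ (f ≫ g')) ⊗≫
            adj.counit ▷ g' ⊗≫ 𝟙 _ := by
        bicategory
      _ = 𝟙 _ ⊗≫ (g' ◁ adj.unit ≫ i.inv ▷ (f ≫ g)) ⊗≫
            ((g ≫ f) ◁ i.hom ≫ adj.counit ▷ g') ⊗≫ 𝟙 _ := by
        rw [whisker_exchange]; bicategory
      _ = 𝟙 _ ⊗≫ i.inv ⊗≫ rightZigzag adj.unit adj.counit ⊗≫ i.hom ⊗≫ 𝟙 _ := by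
        rw [whisker_exchange, whisker_exchange]; bicategory
      _ = 𝟙 _ ⊗≫ (i.inv ≫ i.hom) ⊗≫ 𝟙 _ := by rw [adj.right_triangle]; bicategory
      _ = _ := by rw [i.inv_hom_id]; bicategory

end MateAuxForHomCatEquiv

open MateAuxForHomCatEquiv in
/-- In a bicategory in which every 1-morphism admits both a left adjoint and a right
adjoint, for every pair of objects `a`, `b` there is an equivalence of categories
`(a ⟶ b)ᵒᵖ ≌ (b ⟶ a)` whose functor sends each 1-morphism `f : a ⟶ b` to a right adjoint
of `f`, and whose inverse sends each 1-morphism `g : b ⟶ a` to a left adjoint of `g`. -/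
theorem homCat_equivalence_of_has_left_and_right_adjoints
    {B : Type*} [Bicategory B]
    (H : ∀ {x y : B} (f : x ⟶ y),
      (∃ g : y ⟶ x, Nonempty (Bicategory.Adjunction f g)) ∧
      (∃ g' : y ⟶ x, Nonempty (Bicategory.Adjunction g' f)))
    (a b : B) :
    ∃ E : (a ⟶ b)ᵒᵖ ≌ (b ⟶ a),
      (∀ f : a ⟶ b, Nonempty (Bicategory.Adjunction f (E.functor.obj (Opposite.op f)))) ∧
      (∀ g : b ⟶ a, Nonempty (Bicategory.Adjunction (E.inverse.obj g).unop g)) := by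
  classical
  -- choose a right adjoint for each `f : a ⟶ b`
  let R : (a ⟶ b) → (b ⟶ a) := fun f => ((H f).1).choose
  let adjR : ∀ f : a ⟶ b, Adjunction f (R f) := fun f => ((H f).1).choose_spec.some
  -- choose a left adjoint for each `g : b ⟶ a`
  let L : (b ⟶ a) → (a ⟶ b) := fun g => ((H g).2).choose
  let adjL : ∀ g : b ⟶ a, Adjunction (L g) g := fun g => ((H g).2).choose_spec.some
  -- the right-adjoint functor
  let F : (a ⟶ b)ᵒᵖ ⥤ (b ⟶ a) :=
    { obj := fun X => R X.unop
      map := fun {X Y} θ => mateR (adjR X.unop) (adjR Y.unop) θ.unop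
      map_id := fun X => mateR_id (adjR X.unop)
      map_comp := fun {X Y Z} θ θ' =>
        (mateR_comp (adjR X.unop) (adjR Y.unop) (adjR Z.unop) θ.unop θ'.unop).symm }
  have hfaith : F.Faithful := by
    constructor
    intro X Y θ θ' h
    have := congrArg (mateL (adjR X.unop) (adjR Y.unop)) h
    rw [mateL_mateR, mateL_mateR] at this
    exact Quiver.Hom.unop_inj this
  have hfull : F.Full := by
    constructor
    intro X Y ψ
    exact ⟨(mateL (adjR X.unop) (adjR Y.unop) ψ).op,
      mateR_mateL (adjR X.unop) (adjR Y.unop) ψ⟩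
  have hess : F.EssSurj := by
    constructor
    intro g
    refine ⟨Opposite.op (L g), ⟨?_⟩⟩
    exact
      { hom := mateR (adjR (L g)) (adjL g) (𝟙 (L g))
        inv := mateR (adjL g) (adjR (L g)) (𝟙 (L g))
        hom_inv_id := by
          rw [mateR_comp, Category.id_comp, mateR_id]
        inv_hom_id := by
          rw [mateR_comp, Category.id_comp, mateR_id] }
  have : F.IsEquivalence := ⟨hfaith, hfull, hess⟩
  refine ⟨F.asEquivalence, fun f => ⟨adjR f⟩, fun g => ?_⟩
  exact ⟨adjOfIsoRight (adjR ((F.asEquivalence.inverse.obj g).unop))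
    (F.asEquivalence.counitIso.app g)⟩
end

section
/- Let k be an algebraically closed field of characteristic zero and G a finite abelian group (written additively). Let b : G → G → kˣ be an alternating bicharacter (multiplicative in each variable, with b(g,g) = 1 for all g). Then there exists a 2-cocycle φ : G → G → kˣ such that Alt(φ) = b, i.e., φ(g,h)·φ(h,g)⁻¹ = b(g,h) for all g, h ∈ G. -/
/-- Over an algebraically closed field `k` of characteristic zero, every alternating
bicharacter `b` on a finite abelian group `G` with values in `kˣ` is of the form `Alt(φ)`
for some 2-cocycle `φ` on `G`: there is a 2-cocycle `φ` with `φ(g,h)·φ(h,g)⁻¹ = b(g,h)`. -/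
theorem alternating_bicharacter_is_alt_of_two_cocycle
    (k : Type*) [Field k] [IsAlgClosed k] [CharZero k]
    {G : Type*} [AddCommGroup G] [Finite G] (b : G → G → kˣ)
    (hb₁ : ∀ g g' h : G, b (g + g') h = b g h * b g' h)
    (hb₂ : ∀ g h h' : G, b g (h + h') = b g h * b g h')
    (halt : ∀ g : G, b g g = 1) :
    ∃ φ : G → G → kˣ,
      (∀ g h m : G, φ g h * φ (g + h) m = φ h m * φ g (h + m)) ∧
      (∀ g h : G, φ g h * (φ h g)⁻¹ = b g h) := by
  classical
  obtain ⟨ι, hι, n, hn, ⟨e⟩⟩ := AddCommGroup.equiv_directSum_zmod_of_finite' G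
  letI : Fintype ι := hι
  letI : LinearOrder ι :=
    LinearOrder.lift' (Fintype.equivFin ι) (Fintype.equivFin ι).injective
  haveI : ∀ i, NeZero (n i) := fun i => ⟨by have := hn i; omega⟩
  -- basic properties of b
  have hb0l : ∀ h : G, b 0 h = 1 := by
    intro h
    have := hb₁ 0 0 h
    rw [add_zero] at this
    exact (mul_eq_left.mp this.symm)
  have hb0r : ∀ g : G, b g 0 = 1 := by
    intro g
    have := hb₂ g 0 0
    rw [add_zero] at this
    exact (mul_eq_left.mp this.symm)
  have hskew : ∀ g h : G, b h g = (b g h)⁻¹ := by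
    intro g h
    have := halt (g + h)
    rw [hb₁, hb₂, hb₂, halt g, halt h, one_mul, mul_one] at this
    rw [eq_inv_iff_mul_eq_one, mul_comm]
    exact this
  have hpowl : ∀ (m : ℕ) (g h : G), b (m • g) h = b g h ^ m := by
    intro m g h
    induction m with
    | zero => simpa using hb0l h
    | succ p ih => rw [succ_nsmul, hb₁, ih, pow_succ]
  have hpowr : ∀ (m : ℕ) (g h : G), b g (m • h) = b g h ^ m := by
    intro m g h
    induction m with
    | zero => simpa using hb0r g
    | succ p ih => rw [succ_nsmul, hb₂, ih, pow_succ]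
  have hsuml : ∀ (s : Finset ι) (f : ι → G) (h : G),
      b (∑ i ∈ s, f i) h = ∏ i ∈ s, b (f i) h := by
    intro s f h
    induction s using Finset.induction with
    | empty => simpa using hb0l h
    | insert _ _ hx ih =>
      rw [Finset.sum_insert hx, Finset.prod_insert hx, hb₁, ih]
  have hsumr : ∀ (g : G) (s : Finset ι) (f : ι → G),
      b g (∑ i ∈ s, f i) = ∏ i ∈ s, b g (f i) := by
    intro g s f
    induction s using Finset.induction with
    | empty => simpa using hb0r g
    | insert _ _ hx ih =>
      rw [Finset.sum_insert hx, Finset.prod_insert hx, hb₂, ih]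
  -- coordinates
  set w : ι → G := fun i => e.symm (DirectSum.of (fun i => ZMod (n i)) i 1) with hw
  set c : ι → ι → kˣ := fun i j => b (w i) (w j) with hc
  set X : G → ι → ℕ := fun g i => (e g i).val with hX
  have hwsmul : ∀ i, (n i) • w i = 0 := by
    intro i
    rw [hw]
    rw [← map_nsmul, ← map_nsmul]
    have : (n i) • (1 : ZMod (n i)) = 0 := by
      simp [nsmul_eq_mul, ZMod.natCast_self]
    rw [this, map_zero, map_zero]
  have hcq1 : ∀ i j, c i j ^ (n i) = 1 := by
    intro i j
    rw [hc, ← hpowl, hwsmul, hb0l]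
  have hcq2 : ∀ i j, c i j ^ (n j) = 1 := by
    intro i j
    rw [hc, ← hpowr, hwsmul, hb0r]
  have hdiag : ∀ i, c i i = 1 := fun i => halt (w i)
  have hcswap : ∀ i j, c j i = (c i j)⁻¹ := fun i j => hskew (w i) (w j)
  -- decomposition of g
  have hdecomp : ∀ g : G, g = ∑ i, (X g i) • w i := by
    intro g
    conv_lhs => rw [← e.symm_apply_apply g, ← DirectSum.sum_univ_of (e g)]
    rw [map_sum]
    refine Finset.sum_congr rfl fun i _ => ?_
    have h1 : DirectSum.of (fun i => ZMod (n i)) i (e g i)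
        = (X g i) • DirectSum.of (fun i => ZMod (n i)) i 1 := by
      rw [← map_nsmul]
      congr 1
      rw [hX, nsmul_eq_mul, mul_one]
      exact (ZMod.natCast_rightInverse (e g i)).symm
    rw [h1, map_nsmul, hw]
  have hXadd : ∀ (g h : G) i, X (g + h) i ≡ X g i + X h i [MOD n i] := by
    intro g h i
    rw [hX]
    simp only [map_add, DirectSum.add_apply]
    rw [ZMod.val_add]
    exact (Nat.mod_modEq _ _)
  -- expansion of b in coordinates
  have hbexp : ∀ g h : G, b g h = ∏ i, ∏ j, c i j ^ (X g i * X h j) := by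
    intro g h
    conv_lhs => rw [hdecomp g, hdecomp h]
    rw [hsuml]
    refine Finset.prod_congr rfl fun i _ => ?_
    rw [hsumr]
    refine Finset.prod_congr rfl fun j _ => ?_
    rw [hpowl, hpowr, ← pow_mul, mul_comm]
  -- congruence tool
  have key : ∀ i j (a a' t : ℕ), a ≡ a' [MOD n i] →
      c i j ^ (a * t) = c i j ^ (a' * t) := by
    intro i j a a' t h
    exact pow_eq_pow_iff_modEq.mpr
      ((h.mul_right t).of_dvd (orderOf_dvd_of_pow_eq_one (hcq1 i j)))
  have key2 : ∀ i j (a a' t : ℕ), a ≡ a' [MOD n j] →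
      c i j ^ (t * a) = c i j ^ (t * a') := by
    intro i j a a' t h
    exact pow_eq_pow_iff_modEq.mpr
      ((h.mul_left t).of_dvd (orderOf_dvd_of_pow_eq_one (hcq2 i j)))
  -- the cocycle
  set S : Finset (ι × ι) := Finset.univ.filter (fun p => p.1 < p.2) with hS
  set φ : G → G → kˣ :=
    fun g h => ∏ p ∈ S, c p.1 p.2 ^ (X g p.1 * X h p.2) with hφ
  have hmul1 : ∀ g g' h : G, φ (g + g') h = φ g h * φ g' h := by
    intro g g' h
    rw [hφ, ← Finset.prod_mul_distrib]
    refine Finset.prod_congr rfl fun p _ => ?_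
    rw [key p.1 p.2 _ _ _ (hXadd g g' p.1), add_mul, pow_add]
  have hmul2 : ∀ g h h' : G, φ g (h + h') = φ g h * φ g h' := by
    intro g h h'
    rw [hφ, ← Finset.prod_mul_distrib]
    refine Finset.prod_congr rfl fun p _ => ?_
    rw [key2 p.1 p.2 _ _ _ (hXadd h h' p.2), mul_add, pow_add]
  refine ⟨φ, ?_, ?_⟩
  · intro g h m
    rw [hmul1 g h m, hmul2 g h m]
    exact (mul_assoc _ _ _).symm.trans (mul_comm _ _)
  · intro g h
    rw [hbexp g h]
    have huniv : (∏ i, ∏ j, c i j ^ (X g i * X h j))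
        = ∏ p : ι × ι, c p.1 p.2 ^ (X g p.1 * X h p.2) := by
      rw [← Finset.univ_product_univ, Finset.prod_product]
    rw [huniv]
    rw [← Finset.prod_filter_mul_prod_filter_not Finset.univ (fun p : ι × ι => p.1 < p.2)]
    have hfirst : (∏ p ∈ Finset.univ.filter (fun p : ι × ι => p.1 < p.2),
        c p.1 p.2 ^ (X g p.1 * X h p.2)) = φ g h := rfl
    have hsecond : (∏ p ∈ Finset.univ.filter (fun p : ι × ι => ¬ p.1 < p.2),
        c p.1 p.2 ^ (X g p.1 * X h p.2)) = (φ h g)⁻¹ := by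
      have hsub : (Finset.univ.filter (fun p : ι × ι => p.2 < p.1))
          ⊆ (Finset.univ.filter (fun p : ι × ι => ¬ p.1 < p.2)) := by
        intro p hp
        simp only [Finset.mem_filter, Finset.mem_univ, true_and] at hp ⊢
        exact not_lt_of_gt hp
      rw [← Finset.prod_subset hsub ?_]
      · -- reindex by swap
        have hbij : (∏ p ∈ Finset.univ.filter (fun p : ι × ι => p.2 < p.1),
            c p.1 p.2 ^ (X g p.1 * X h p.2))
            = ∏ p ∈ S, c p.2 p.1 ^ (X g p.2 * X h p.1) := by
          refine Finset.prod_nbij' (fun p => (p.2, p.1)) (fun p => (p.2, p.1)) ?_ ?_ ?_ ?_ ?_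
          · intro p hp
            simp only [Finset.mem_filter, Finset.mem_univ, true_and, hS] at hp ⊢
            exact hp
          · intro p hp
            simp only [Finset.mem_filter, Finset.mem_univ, true_and, hS] at hp ⊢
            exact hp
          · intro p _; rfl
          · intro p _; rfl
          · intro p _; rfl
        rw [hbij, hφ, ← Finset.prod_inv_distrib]
        refine Finset.prod_congr rfl fun p _ => ?_
        rw [hcswap, inv_pow, mul_comm (X h p.1)]
      · intro p hp hnp
        simp only [Finset.mem_filter, Finset.mem_univ, true_and] at hp hnp
        have : p.1 = p.2 := le_antisymm (not_lt.mp hnp) (not_lt.mp hp)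
        rw [show c p.1 p.2 = 1 by rw [this, hdiag], one_pow]
    rw [hfirst, hsecond]
end

section
/- Let A be an abelian group (written additively), E and F subgroups of A, and M a commutative group (written multiplicatively). Let φ : E → E → M and ψ : F → F → M be 2-cocycles, and let β : A → A → M be a bicharacter. Define b on the group E × F by b((e₁,f₁),(e₂,f₂)) = Alt(φ)(e₁,e₂) · Alt(ψ)(f₁,f₂) · β(f₁,e₂) · β(f₂,e₁)⁻¹. Then b is a bicharacter on E × F that is skew-symmetric (b(x,y)·b(y,x) = 1 for all x, y) and alternating (b(x,x) = 1 for all x). -/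
/-- The form `b` on `E × F` built from 2-cocycles `φ` on `E`, `ψ` on `F` and a bicharacter
`β` on `A`:
`b((e₁,f₁),(e₂,f₂)) = Alt(φ)(e₁,e₂) · Alt(ψ)(f₁,f₂) · β(f₁,e₂) · β(f₂,e₁)⁻¹`. -/
def prodForm {A M : Type*} [AddCommGroup A] [CommGroup M] {E F : AddSubgroup A}
    (φ : E → E → M) (ψ : F → F → M) (β : A → A → M) : E × F → E × F → M :=
  fun x y =>
    (φ x.1 y.1 * (φ y.1 x.1)⁻¹) * (ψ x.2 y.2 * (ψ y.2 x.2)⁻¹) *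
      β (x.2 : A) (y.1 : A) * (β (y.2 : A) (x.1 : A))⁻¹


lemma alt_add {M : Type*} [CommGroup M] {G : Type*} [AddCommGroup G] (φ : G → G → M)
    (hφ : ∀ g h m : G, φ g h * φ (g + h) m = φ h m * φ g (h + m)) (g h k : G) :
    φ (g + h) k * (φ k (g + h))⁻¹ = (φ g k * (φ k g)⁻¹) * (φ h k * (φ k h)⁻¹) := by
  have h1 := hφ g h k
  have h2 := hφ g k h
  have h3 := hφ k g h
  rw [add_comm k g] at h3
  rw [add_comm k h] at h2
  have big : (φ g h * φ (g + h) k) * (φ k h * φ g (h + k)) * (φ k g * φ (g + k) h)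
      = (φ h k * φ g (h + k)) * (φ g k * φ (g + k) h) * (φ g h * φ k (g + h)) := by
    rw [h1, ← h2, h3]
  have key : φ (g + h) k * φ k h * φ k g = φ h k * φ g k * φ k (g + h) := by
    have h' : (φ (g + h) k * φ k h * φ k g) * (φ g h * φ g (h + k) * φ (g + k) h)
        = (φ h k * φ g k * φ k (g + h)) * (φ g h * φ g (h + k) * φ (g + k) h) := by
      calc (φ (g + h) k * φ k h * φ k g) * (φ g h * φ g (h + k) * φ (g + k) h)
          = (φ g h * φ (g + h) k) * (φ k h * φ g (h + k)) * (φ k g * φ (g + k) h) := by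
            simp only [mul_comm, mul_left_comm, mul_assoc]
        _ = (φ h k * φ g (h + k)) * (φ g k * φ (g + k) h) * (φ g h * φ k (g + h)) := big
        _ = (φ h k * φ g k * φ k (g + h)) * (φ g h * φ g (h + k) * φ (g + k) h) := by
            simp only [mul_comm, mul_left_comm, mul_assoc]
    exact mul_right_cancel h'
  have e : φ (g + h) k = φ h k * φ g k * φ k (g + h) * (φ k h * φ k g)⁻¹ :=
    eq_mul_inv_iff_mul_eq.mpr (by rw [← mul_assoc]; exact key)
  rw [e]
  simp only [mul_inv]
  generalize φ g k = a at *
  generalize φ h k = b at *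
  generalize φ k g = c at *
  generalize φ k h = d at *
  generalize φ k (g+h) = p at *
  rw [show b * a * p * (d⁻¹ * c⁻¹) * p⁻¹ = b * a * (d⁻¹ * c⁻¹) * (p * p⁻¹) by
    simp only [mul_comm, mul_left_comm, mul_assoc]]
  rw [mul_inv_cancel, mul_one]
  simp only [mul_comm, mul_left_comm, mul_assoc]

/-- Let `E`, `F` be subgroups of an abelian group `A`, let `φ`, `ψ` be 2-cocycles on `E`, `F`
valued in a commutative group `M`, and let `β` be a bicharacter on `A`. Then
`b((e₁,f₁),(e₂,f₂)) = Alt(φ)(e₁,e₂)·Alt(ψ)(f₁,f₂)·β(f₁,e₂)·β(f₂,e₁)⁻¹` is a bicharacter on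
`E × F` that is skew-symmetric and alternating. -/
theorem prodForm_is_alternating_bicharacter
    {A M : Type*} [AddCommGroup A] [CommGroup M] (E F : AddSubgroup A)
    (φ : E → E → M) (ψ : F → F → M) (β : A → A → M)
    (hφ : ∀ g h m : E, φ g h * φ (g + h) m = φ h m * φ g (h + m))
    (hψ : ∀ g h m : F, ψ g h * ψ (g + h) m = ψ h m * ψ g (h + m))
    (hβ₁ : ∀ a a' c : A, β (a + a') c = β a c * β a' c)
    (hβ₂ : ∀ a c c' : A, β a (c + c') = β a c * β a c') :
    (∀ x y z : E × F, prodForm φ ψ β (x + y) z = prodForm φ ψ β x z * prodForm φ ψ β y z) ∧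
    (∀ x y z : E × F, prodForm φ ψ β x (y + z) = prodForm φ ψ β x y * prodForm φ ψ β x z) ∧
    (∀ x y : E × F, prodForm φ ψ β x y * prodForm φ ψ β y x = 1) ∧
    (∀ x : E × F, prodForm φ ψ β x x = 1) := by
  have aφ := alt_add φ hφ
  have aψ := alt_add ψ hψ
  have aφ' : ∀ g h k : (E : Type _), φ g (h + k) * (φ (h + k) g)⁻¹
      = (φ g h * (φ h g)⁻¹) * (φ g k * (φ k g)⁻¹) := by
    intro g h k
    calc φ g (h + k) * (φ (h + k) g)⁻¹ = (φ (h + k) g * (φ g (h + k))⁻¹)⁻¹ := by group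
      _ = (φ h g * (φ g h)⁻¹ * (φ k g * (φ g k)⁻¹))⁻¹ := by rw [aφ h k g]
      _ = _ := by simp only [mul_inv, inv_inv, mul_comm, mul_left_comm, mul_assoc]
  have aψ' : ∀ g h k : (F : Type _), ψ g (h + k) * (ψ (h + k) g)⁻¹
      = (ψ g h * (ψ h g)⁻¹) * (ψ g k * (ψ k g)⁻¹) := by
    intro g h k
    calc ψ g (h + k) * (ψ (h + k) g)⁻¹ = (ψ (h + k) g * (ψ g (h + k))⁻¹)⁻¹ := by group
      _ = (ψ h g * (ψ g h)⁻¹ * (ψ k g * (ψ g k)⁻¹))⁻¹ := by rw [aψ h k g]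
      _ = _ := by simp only [mul_inv, inv_inv, mul_comm, mul_left_comm, mul_assoc]
  refine ⟨?_, ?_, ?_, ?_⟩
  · intro x y z
    simp only [prodForm, Prod.fst_add, Prod.snd_add, AddSubgroup.coe_add, aφ, aψ, hβ₁, hβ₂,
      mul_inv]
    simp only [mul_comm, mul_left_comm, mul_assoc]
  · intro x y z
    simp only [prodForm, Prod.fst_add, Prod.snd_add, AddSubgroup.coe_add, aφ', aψ', hβ₁, hβ₂,
      mul_inv]
    simp only [mul_comm, mul_left_comm, mul_assoc]
  · intro x y
    have hsym : prodForm φ ψ β x y = (prodForm φ ψ β y x)⁻¹ := by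
      simp only [prodForm, mul_inv, inv_inv]
      simp only [mul_comm, mul_left_comm, mul_assoc]
    rw [hsym, inv_mul_cancel]
  · intro x
    simp [prodForm]
end

section
/- Let A be an abelian group (written additively), E and F subgroups of A, and M a commutative group (written multiplicatively). Let φ : E → E → M and ψ : F → F → M be 2-cocycles, and let β : A → A → M be a bicharacter. Define τ on the group E × F by τ((e₁,f₁),(e₂,f₂)) = φ(e₁,e₂) · ψ(f₁,f₂) · β(f₁,e₂). Then τ is a 2-cocycle on E × F, and Alt(τ) = b, where b((e₁,f₁),(e₂,f₂)) = Alt(φ)(e₁,e₂) · Alt(ψ)(f₁,f₂) · β(f₁,e₂) · β(f₂,e₁)⁻¹. -/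
/-- The twisted product cocycle `τ((e₁,f₁),(e₂,f₂)) = φ(e₁,e₂) · ψ(f₁,f₂) · β(f₁,e₂)`. -/
def twistedProdCocycle {A M : Type*} [AddCommGroup A] [CommGroup M] {E F : AddSubgroup A}
    (φ : E → E → M) (ψ : F → F → M) (β : A → A → M) : E × F → E × F → M :=
  fun x y => φ x.1 y.1 * ψ x.2 y.2 * β (x.2 : A) (y.1 : A)

/-- Let `E`, `F` be subgroups of an abelian group `A`, let `φ`, `ψ` be 2-cocycles on `E`, `F`
valued in a commutative group `M`, and let `β` be a bicharacter on `A`. Then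
`τ((e₁,f₁),(e₂,f₂)) = φ(e₁,e₂)·ψ(f₁,f₂)·β(f₁,e₂)` is a 2-cocycle on `E × F` and its
alternating form `Alt(τ)` is
`b((e₁,f₁),(e₂,f₂)) = Alt(φ)(e₁,e₂)·Alt(ψ)(f₁,f₂)·β(f₁,e₂)·β(f₂,e₁)⁻¹`. -/
theorem twistedProdCocycle_is_cocycle_and_alt
    {A M : Type*} [AddCommGroup A] [CommGroup M] (E F : AddSubgroup A)
    (φ : E → E → M) (ψ : F → F → M) (β : A → A → M)
    (hφ : ∀ g h m : E, φ g h * φ (g + h) m = φ h m * φ g (h + m))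
    (hψ : ∀ g h m : F, ψ g h * ψ (g + h) m = ψ h m * ψ g (h + m))
    (hβ₁ : ∀ a a' c : A, β (a + a') c = β a c * β a' c)
    (hβ₂ : ∀ a c c' : A, β a (c + c') = β a c * β a c') :
    (∀ x y z : E × F, twistedProdCocycle φ ψ β x y * twistedProdCocycle φ ψ β (x + y) z =
      twistedProdCocycle φ ψ β y z * twistedProdCocycle φ ψ β x (y + z)) ∧
    (∀ x y : E × F, twistedProdCocycle φ ψ β x y * (twistedProdCocycle φ ψ β y x)⁻¹ =
      prodForm φ ψ β x y) := by
  constructor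
  · rintro ⟨e₁, f₁⟩ ⟨e₂, f₂⟩ ⟨e₃, f₃⟩
    simp only [twistedProdCocycle, Prod.fst_add, Prod.snd_add, AddSubgroup.coe_add,
      hβ₁, hβ₂]
    have h1 := hφ e₁ e₂ e₃
    have h2 := hψ f₁ f₂ f₃
    calc φ e₁ e₂ * ψ f₁ f₂ * β (f₁:A) (e₂:A) *
          (φ (e₁+e₂) e₃ * ψ (f₁+f₂) f₃ * (β (f₁:A) (e₃:A) * β (f₂:A) (e₃:A)))
        = (φ e₁ e₂ * φ (e₁+e₂) e₃) * (ψ f₁ f₂ * ψ (f₁+f₂) f₃) *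
          (β (f₁:A) (e₂:A) * β (f₁:A) (e₃:A) * β (f₂:A) (e₃:A)) := by simp only [mul_assoc, mul_left_comm, mul_comm]
      _ = (φ e₂ e₃ * φ e₁ (e₂+e₃)) * (ψ f₂ f₃ * ψ f₁ (f₂+f₃)) *
          (β (f₁:A) (e₂:A) * β (f₁:A) (e₃:A) * β (f₂:A) (e₃:A)) := by rw [h1, h2]
      _ = φ e₂ e₃ * ψ f₂ f₃ * β (f₂:A) (e₃:A) *
          (φ e₁ (e₂+e₃) * ψ f₁ (f₂+f₃) * (β (f₁:A) (e₂:A) * β (f₁:A) (e₃:A))) := by simp only [mul_assoc, mul_left_comm, mul_comm]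
  · rintro ⟨e₁, f₁⟩ ⟨e₂, f₂⟩
    simp only [twistedProdCocycle, prodForm, mul_inv]
    simp only [mul_assoc, mul_left_comm, mul_comm]
end

section
/- Let k be an algebraically closed field of characteristic zero, G a finite abelian group (written additively), b : G → G → kˣ a skew-symmetric bicharacter, and K a subgroup of G. Let K^⊥ = {g ∈ G : b(g,x) = 1 for all x ∈ K} and let rad(b) = G^⊥ be the radical of b. Then |K^⊥| · |K| = |G| · |K ∩ rad(b)|. In particular |G| divides |K^⊥| · |K|, so the multiplicity m = |K^⊥| · |K| / |G| appearing in Proposition 2.24 (where G = E ⊕ F and K is the antidiagonal copy of E ∩ F, so that m = |(E∩F)^⊥| · |E∩F| / (|E| · |F|)) is a positive integer, equal to |K ∩ rad(b)|. -/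
section Aux

variable (k : Type*) [Field k] [IsAlgClosed k] [CharZero k]

lemma aux_dual_equiv (A : Type*) [AddCommGroup A] [Finite A] :
    Nonempty ((A →+ Additive kˣ) ≃ A) := by
  have hne : (Monoid.exponent (Multiplicative A)) ≠ 0 :=
    Monoid.exponent_ne_zero_of_finite
  have : NeZero ((Monoid.exponent (Multiplicative A) : k)) :=
    ⟨Nat.cast_ne_zero.mpr hne⟩
  obtain ⟨e⟩ := CommGroup.monoidHom_mulEquiv_of_hasEnoughRootsOfUnity (Multiplicative A) k
  exact ⟨AddMonoidHom.toMultiplicativeLeft.trans e.toEquiv⟩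

lemma aux_dual_card (A : Type*) [AddCommGroup A] [Finite A] :
    Nat.card (A →+ Additive kˣ) = Nat.card A := by
  obtain ⟨e⟩ := aux_dual_equiv k A
  exact Nat.card_congr e

lemma aux_dual_finite (A : Type*) [AddCommGroup A] [Finite A] :
    Finite (A →+ Additive kˣ) := by
  obtain ⟨e⟩ := aux_dual_equiv k A
  exact Finite.of_equiv A e.symm

/-- For a pairing `p` of finite abelian groups, `|A ⧸ ker p| ≤ |B ⧸ ker p.flip|`. -/
lemma aux_pairing_card_le {A B : Type*} [AddCommGroup A] [AddCommGroup B] [Finite A] [Finite B]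
    (p : A →+ (B →+ Additive kˣ)) :
    Nat.card (A ⧸ p.ker) ≤ Nat.card (B ⧸ p.flip.ker) := by
  set N := p.flip.ker with hN
  have hkill : ∀ a : A, ∀ x ∈ N, p a x = 0 := by
    intro a x hx
    have : p.flip x = 0 := hx
    simpa using congrArg (fun f => f a) this
  let q : A →+ ((B ⧸ N) →+ Additive kˣ) :=
    { toFun := fun a => QuotientAddGroup.lift N (p a) (hkill a)
      map_zero' := AddMonoidHom.ext fun x =>
        QuotientAddGroup.induction_on x fun b => by simp
      map_add' := fun a a' => AddMonoidHom.ext fun x =>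
        QuotientAddGroup.induction_on x fun b => by simp; rfl }
  have hker : q.ker = p.ker := by
    ext a
    constructor
    · intro ha
      refine AddMonoidHom.ext fun b => ?_
      have := congrArg (fun f => f ((b : B ⧸ N))) (show q a = 0 from ha)
      exact this
    · intro ha
      have ha' : p a = 0 := ha
      refine AddMonoidHom.ext fun x => QuotientAddGroup.induction_on x fun b => ?_
      simp [q, ha']
  have : Finite ((B ⧸ N) →+ Additive kˣ) := aux_dual_finite k _
  calc Nat.card (A ⧸ p.ker)
      = Nat.card (A ⧸ q.ker) := by rw [hker]
    _ ≤ Nat.card ((B ⧸ N) →+ Additive kˣ) :=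
        Nat.card_le_card_of_injective _ (QuotientAddGroup.kerLift_injective q)
    _ = Nat.card (B ⧸ N) := aux_dual_card k _

lemma aux_pairing_card_eq {A B : Type*} [AddCommGroup A] [AddCommGroup B] [Finite A] [Finite B]
    (p : A →+ (B →+ Additive kˣ)) :
    Nat.card (A ⧸ p.ker) = Nat.card (B ⧸ p.flip.ker) := by
  refine le_antisymm (aux_pairing_card_le k p) ?_
  have hff : p.flip.flip = p := by ext a b; rfl
  have := aux_pairing_card_le k p.flip
  rwa [hff] at this

end Aux

/-- Let `k` be an algebraically closed field of characteristic zero, `G` a finite abelian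
group, `b : G → G → kˣ` a skew-symmetric bicharacter, and `K ≤ G` a subgroup. With
`K^⊥ = {g : ∀ x ∈ K, b g x = 1}` and `rad(b) = G^⊥`, one has
`|K^⊥| · |K| = |G| · |K ∩ rad(b)|`; in particular `|G|` divides `|K^⊥| · |K|`, so the
multiplicity `m = |K^⊥| · |K| / |G|` of Proposition 2.24 is a positive integer, equal to
`|K ∩ rad(b)|`. -/
theorem card_orthogonal_mul_card_eq
    (k : Type*) [Field k] [IsAlgClosed k] [CharZero k]
    {G : Type*} [AddCommGroup G] [Finite G] (b : G → G → kˣ)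
    (hb₁ : ∀ g g' h : G, b (g + g') h = b g h * b g' h)
    (hb₂ : ∀ g h h' : G, b g (h + h') = b g h * b g h')
    (hskew : ∀ g h : G, b g h * b h g = 1)
    (K : AddSubgroup G) :
    Nat.card {g : G // ∀ z ∈ K, b g z = 1} * Nat.card K =
      Nat.card G * Nat.card {g : G // g ∈ K ∧ ∀ z : G, b g z = 1} ∧
    Nat.card G ∣ Nat.card {g : G // ∀ z ∈ K, b g z = 1} * Nat.card K := by
  have hz₂ : ∀ g : G, b g 0 = 1 := fun g => by
    have h := hb₂ g 0 0; rw [add_zero] at h; exact left_eq_mul.mp h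
  have hz₁ : ∀ h : G, b 0 h = 1 := fun h => by
    have h' := hb₁ 0 0 h; rw [add_zero] at h'; exact left_eq_mul.mp h'
  -- the pairing G × K → kˣ as an AddMonoidHom
  let p : G →+ (K →+ Additive kˣ) :=
    { toFun := fun g =>
        { toFun := fun x => Additive.ofMul (b g x.1)
          map_zero' := by simp [hz₂ g]
          map_add' := fun x y => by
            simp only [AddSubgroup.coe_add]
            rw [hb₂]; rfl }
      map_zero' := AddMonoidHom.ext fun x => by simp [hz₁]
      map_add' := fun g g' => AddMonoidHom.ext fun x => by
        simp only [AddMonoidHom.coe_mk, ZeroHom.coe_mk, AddMonoidHom.add_apply]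
        rw [hb₁]; rfl }
  -- identify kernels
  have hkerp : ∀ g : G, p g = 0 ↔ ∀ z ∈ K, b g z = 1 := by
    intro g
    constructor
    · intro hg z hzK
      have := congrArg (fun f => f ⟨z, hzK⟩) hg
      simpa [p] using this
    · intro hg
      refine AddMonoidHom.ext fun x => ?_
      simpa [p] using hg x.1 x.2
  have hkerflip : ∀ x : K, p.flip x = 0 ↔ ∀ z : G, b (x : G) z = 1 := by
    intro x
    have key : ∀ z : G, b z (x : G) = 1 ↔ b (x : G) z = 1 := by
      intro z
      constructor
      · intro h; have := hskew x.1 z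
        rwa [h, mul_one] at this
      · intro h; have := hskew x.1 z
        rw [h, one_mul] at this; exact this
    constructor
    · intro hx z
      have := congrArg (fun f => f z) hx
      have h1 : b z (x : G) = 1 := by
        simpa [p, AddMonoidHom.flip_apply] using this
      exact (key z).mp h1
    · intro hx
      refine AddMonoidHom.ext fun z => ?_
      have h1 : b z (x : G) = 1 := (key z).mpr (hx z)
      simpa [p, AddMonoidHom.flip_apply] using h1
  -- cardinalities of kernels
  have hc₁ : Nat.card {g : G // ∀ z ∈ K, b g z = 1} = Nat.card p.ker := by
    refine Nat.card_congr (Equiv.subtypeEquivRight fun g => ?_).symm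
    exact AddMonoidHom.mem_ker.trans (hkerp g)
  have hc₂ : Nat.card {g : G // g ∈ K ∧ ∀ z : G, b g z = 1} = Nat.card p.flip.ker := by
    exact Nat.card_congr
      ⟨fun g => ⟨⟨g.1, g.2.1⟩, AddMonoidHom.mem_ker.mpr ((hkerflip ⟨g.1, g.2.1⟩).mpr g.2.2)⟩,
       fun x => ⟨x.1.1, x.1.2, (hkerflip x.1).mp (AddMonoidHom.mem_ker.mp x.2)⟩,
       fun g => rfl, fun x => rfl⟩
  -- Lagrange
  have hG : Nat.card G = Nat.card (G ⧸ p.ker) * Nat.card p.ker :=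
    AddSubgroup.card_eq_card_quotient_mul_card_addSubgroup p.ker
  have hK : Nat.card K = Nat.card (K ⧸ p.flip.ker) * Nat.card p.flip.ker :=
    AddSubgroup.card_eq_card_quotient_mul_card_addSubgroup p.flip.ker
  have hEq : Nat.card (G ⧸ p.ker) = Nat.card (K ⧸ p.flip.ker) :=
    aux_pairing_card_eq k p
  have main : Nat.card {g : G // ∀ z ∈ K, b g z = 1} * Nat.card K =
      Nat.card G * Nat.card {g : G // g ∈ K ∧ ∀ z : G, b g z = 1} := by
    rw [hc₁, hc₂, hG, hK, hEq]; ring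
  exact ⟨main, main ▸ Dvd.intro _ rfl⟩
end
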